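/- arXiv:math/0512010 — 2 statements merged into one kernel-verified Lean document; each statement's English description precedes it below -/
import Mathlib

section
/- Let G₁ and G₂ be two independent random graphs on the vertex set {1,…,n}, each distributed as G(n, m(n)). For every ε > 0, if m(n) ≤ (1/2 − ε)n for all n, then the probability that G₁ and G₂ admit disjoint covers tends to 1 as n → ∞. -/
/-!
Taking `C₂ = C₁ᶜ`, disjoint covers are a satisfying assignment of the 2-SAT formula with a clause
`x_u ∨ x_v` for every edge of `G₁` and `¬x_u ∨ ¬x_v` for every edge of `G₂`. An unsatisfiable
2-SAT formula contains a bicycle: a walk in the implication graph through `t` distinct vertices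
whose two ends return into it, using `t + 1` distinct clauses. Implications alternate between
`G₁` and `G₂`, so a bicycle is fixed by its `t` vertices, two return positions and one sign, and
its clauses are all present with probability at most `p ^ (t + 1)`, where `p = m / (n choose 2)`.
As `n p ≤ 1 - ε`, the expected number of bicycles is at most `2 p ∑ t² (1 - ε)ᵗ = O(1 / n)`.
-/

open Filter Finset

open scoped Classical

/-- Two hypergraphs (given by their edge sets) on the vertex set `{1,…,n}`
admit disjoint covers. -/
def DisjointCovers {n : ℕ} (H₁ H₂ : Finset (Finset (Fin n))) : Prop :=
  ∃ C₁ C₂ : Finset (Fin n), Disjoint C₁ C₂ ∧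
    (∀ e ∈ H₁, ∃ v ∈ e, v ∈ C₁) ∧ (∀ e ∈ H₂, ∃ v ∈ e, v ∈ C₂)

/-- The set of all `k`-uniform hypergraphs on `{1,…,n}` with exactly `m` edges;
the distribution `H_k(n,m)` is uniform on this set. -/
noncomputable def hypSpace (n k m : ℕ) : Finset (Finset (Finset (Fin n))) :=
  Finset.univ.filter (fun H => (∀ e ∈ H, e.card = k) ∧ H.card = m)

/-- The probability that two independent random `k`-uniform hypergraphs, each
distributed as `H_k(n,m)`, admit disjoint covers. -/
noncomputable def probDC (n k m : ℕ) : ℝ :=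
  (((hypSpace n k m ×ˢ hypSpace n k m).filter
      (fun p => DisjointCovers p.1 p.2)).card : ℝ) /
    ((hypSpace n k m ×ˢ hypSpace n k m).card : ℝ)

lemma injOn_of_lt_imp_ne {α β : Type*} [LinearOrder α] {f : α → β} {s : Set α}
    (h : ∀ a ∈ s, ∀ b ∈ s, a < b → f a ≠ f b) : s.InjOn f := by
  intro a ha b hb hab
  by_contra hne
  rcases lt_or_gt_of_ne hne with hlt | hlt
  exacts [h a ha b hb hlt hab, h b hb a ha hlt hab.symm]

/-- Take for `j` the last index below `r` whose value recurs before `L`. -/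
lemma exists_lt_injOn_Ioo {β : Type*} {v : ℕ → β} {r L : ℕ} (hr : 0 < r)
    (hinj : (Set.Ico r L).InjOn v) (h₀ : ∃ q ∈ Set.Ioo 0 L, v q = v 0) :
    ∃ j < r, (Set.Ioo j L).InjOn v ∧ ∃ q ∈ Set.Ioo j L, v q = v j := by
  set P : ℕ → Prop := fun j => ∃ q ∈ Set.Ioo j L, v q = v j
  have hP : P (Nat.findGreatest P (r - 1)) := Nat.findGreatest_spec (Nat.zero_le _) h₀
  refine ⟨_, (Nat.findGreatest_le _).trans_lt (by omega),
    injOn_of_lt_imp_ne fun p hp q hq hpq he => ?_, hP⟩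
  by_cases hpr : p < r
  · exact Nat.findGreatest_is_greatest hp.1 (by omega) ⟨q, ⟨hpq, hq.2⟩, he.symm⟩
  · exact hpq.ne (hinj ⟨by omega, hp.2⟩ ⟨by omega, hq.2⟩ he)

namespace Relation

variable {α : Type*} {r : α → α → Prop}

def IsWalk (r : α → α → Prop) (f : ℕ → α) (k : ℕ) : Prop :=
  ∀ i < k, r (f i) (f (i + 1))

namespace IsWalk

variable {f g : ℕ → α} {k l : ℕ}

lemma mono (hf : IsWalk r f k) (hlk : l ≤ k) : IsWalk r f l :=
  fun i hi => hf i (by omega)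

lemma shift (hf : IsWalk r f k) (i : ℕ) : IsWalk r (fun m => f (i + m)) (k - i) :=
  fun m hm => by simpa only [← add_assoc] using hf (i + m) (by omega)

lemma append (hf : IsWalk r f k) (hg : IsWalk r g l) (h : f k = g 0) :
    IsWalk r (fun m => if m ≤ k then f m else g (m - k)) (k + l) := by
  intro i hi
  rcases lt_trichotomy i k with hik | rfl | hik
  · simpa [hik.le, Nat.succ_le_of_lt hik] using hf i hik
  · simpa [h] using hg 0 (by omega)
  · have := hg (i - k) (by omega)
    simp only [show ¬i ≤ k by omega, show ¬i + 1 ≤ k by omega, if_false]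
    rwa [show i + 1 - k = i - k + 1 by omega]

lemma reflTransGen (hf : IsWalk r f k) {i j : ℕ} (hij : i ≤ j) (hjk : j ≤ k) :
    ReflTransGen r (f i) (f j) := by
  induction j, hij using Nat.le_induction with
  | base => exact .refl
  | succ j hij ih => exact (ih (by omega)).tail (hf j (by omega))

lemma shortcut (hf : IsWalk r f k) {i j : ℕ} (hij : i < j) (hjk : j ≤ k) (he : f i = f j) :
    ∃ g : ℕ → α, g 0 = f 0 ∧ g (k - (j - i)) = f k ∧ IsWalk r g (k - (j - i)) := by
  have hg := (hf.mono (hij.le.trans hjk)).append (hf.shift j) (by simpa using he)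
  refine ⟨fun m => if m ≤ i then f m else f (j + (m - i)), by simp, ?_, by
    rwa [show i + (k - j) = k - (j - i) by omega] at hg⟩
  by_cases hkj : k - (j - i) ≤ i
  · dsimp only
    rw [if_pos hkj, show k - (j - i) = i by omega, he, show j = k by omega]
  · dsimp only
    rw [if_neg hkj, show j + (k - (j - i) - i) = k by omega]

end IsWalk

lemma ReflTransGen.exists_isWalk {a b : α} (h : ReflTransGen r a b) :
    ∃ k f, f 0 = a ∧ f k = b ∧ IsWalk r f k := by
  induction h with
  | refl => exact ⟨0, fun _ => a, rfl, rfl, fun _ h => absurd h (Nat.not_lt_zero _)⟩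
  | @tail b c _ hbc ih =>
    obtain ⟨k, f, hf0, hfk, hf⟩ := ih
    have hstep : IsWalk r (fun m => if m = 0 then b else c) 1 := fun i hi => by
      simpa [show i = 0 by omega] using hbc
    exact ⟨k + 1, _, by simp [hf0], by simp, hf.append hstep (by simp [hfk])⟩

lemma ReflTransGen.exists_isWalk_injOn {a b : α} (h : ReflTransGen r a b) :
    ∃ k f, f 0 = a ∧ f k = b ∧ IsWalk r f k ∧ (Set.Iic k).InjOn f := by
  have hex : ∃ k f, f 0 = a ∧ f k = b ∧ IsWalk r f k := h.exists_isWalk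
  obtain ⟨f, hf0, hfk, hf⟩ := Nat.find_spec hex
  refine ⟨_, f, hf0, hfk, hf, injOn_of_lt_imp_ne fun i _ j hj hij he => ?_⟩
  obtain ⟨g, hg0, hgk, hg⟩ := hf.shortcut hij hj he
  have hj : j ≤ Nat.find hex := hj
  exact Nat.find_min hex (by omega) ⟨g, hg0.trans hf0, hgk.trans hfk, hg⟩

end Relation

lemma Nat.choose_sub_mul_pow_le {N m k : ℕ} (hkm : k ≤ m) (hmN : m ≤ N) :
    (N - k).choose (m - k) * N ^ k ≤ m ^ k * N.choose m := by
  induction k with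
  | zero => simp
  | succ k ih =>
    obtain ⟨a, rfl⟩ : ∃ a, m = k + 1 + a := ⟨m - (k + 1), by omega⟩
    obtain ⟨b, rfl⟩ : ∃ b, N = k + 1 + a + b := ⟨N - (k + 1 + a), by omega⟩
    have ih := ih (by omega)
    rw [show k + 1 + a + b - k = a + b + 1 by omega, show k + 1 + a - k = a + 1 by omega] at ih
    rw [show k + 1 + a + b - (k + 1) = a + b by omega, show k + 1 + a - (k + 1) = a by omega]
    refine Nat.le_of_mul_le_mul_left ?_ (show 0 < a + b + 1 by omega)
    calc (a + b + 1) * ((a + b).choose a * (k + 1 + a + b) ^ (k + 1))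
        = (a + b + 1).choose (a + 1) * (k + 1 + a + b) ^ k * ((a + 1) * (k + 1 + a + b)) := by
          rw [pow_succ, ← mul_assoc, Nat.add_one_mul_choose_eq]; ring
      _ ≤ (a + b + 1).choose (a + 1) * (k + 1 + a + b) ^ k * ((k + 1 + a) * (a + b + 1)) :=
          Nat.mul_le_mul_left _ (by nlinarith [Nat.zero_le (k * b)])
      _ ≤ (k + 1 + a) ^ k * (k + 1 + a + b).choose (k + 1 + a) * ((k + 1 + a) * (a + b + 1)) :=
          Nat.mul_le_mul_right _ ih
      _ = (a + b + 1) * ((k + 1 + a) ^ (k + 1) * (k + 1 + a + b).choose (k + 1 + a)) := by ring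

lemma Finset.card_filter_powersetCard_subset_le {α : Type*} [DecidableEq α] (s t : Finset α)
    (m : ℕ) :
    (#((t.powersetCard m).filter (s ⊆ ·)) : ℝ) ≤ ((m : ℝ) / #t) ^ #s * #(t.powersetCard m) := by
  by_cases h : s ⊆ t ∧ #s ≤ m ∧ m ≤ #t
  · obtain ⟨hst, hsm, hmt⟩ := h
    have hpos : (0 : ℝ) < (#t : ℝ) ^ #s := by
      rcases (#s).eq_zero_or_pos with h0 | h0
      · simp [h0]
      · exact pow_pos (by exact_mod_cast h0.trans_le (card_le_card hst)) _
    rw [card_filter_powersetCard_subset s t m hst hsm, card_powersetCard, div_pow,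
      div_mul_eq_mul_div, le_div_iff₀ hpos]
    exact_mod_cast Nat.choose_sub_mul_pow_le hsm hmt
  · rw [filter_false_of_mem fun H hH hsH => h ?_]
    · simp only [card_empty, Nat.cast_zero]
      positivity
    rw [mem_powersetCard] at hH
    exact ⟨hsH.trans hH.1, hH.2 ▸ card_le_card hsH, hH.2 ▸ card_le_card hH.1⟩

lemma hypSpace_eq_powersetCard (n k m : ℕ) :
    hypSpace n k m = ((univ : Finset (Fin n)).powersetCard k).powersetCard m := by
  ext H
  simp [hypSpace, mem_powersetCard, subset_iff]

lemma card_hypSpace (n k m : ℕ) : #(hypSpace n k m) = (n.choose k).choose m := by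
  simp [hypSpace_eq_powersetCard]

lemma card_filter_subset_disjSum_le (n k m : ℕ) (S : Finset (Finset (Fin n) ⊕ Finset (Fin n))) :
    (#((hypSpace n k m ×ˢ hypSpace n k m).filter fun p => S ⊆ p.1.disjSum p.2) : ℝ) ≤
      ((m : ℝ) / n.choose k) ^ #S * #(hypSpace n k m) ^ 2 := by
  simp_rw [subset_disjSum]
  rw [filter_product (fun H => S.toLeft ⊆ H) (fun H => S.toRight ⊆ H), card_product,
    ← card_toLeft_add_card_toRight, pow_add, Nat.cast_mul, sq]
  have hcard : #((univ : Finset (Fin n)).powersetCard k) = n.choose k := by simp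
  have bound := fun A => hcard ▸ card_filter_powersetCard_subset_le A
    ((univ : Finset (Fin n)).powersetCard k) m
  rw [hypSpace_eq_powersetCard]
  linarith [mul_le_mul (bound S.toLeft) (bound S.toRight) (by positivity) (by positivity)]

namespace DisjointCovers

open Relation

variable {n : ℕ} {H₁ H₂ : Finset (Finset (Fin n))}

/-- The literal `(v, true)` stands for `v ∈ C₁` and `(v, false)` for `v ∈ C₂`, where one may take
`C₂ = C₁ᶜ`: an edge of `H₁` is then the clause `x ∨ y`, an edge of `H₂` the clause `¬x ∨ ¬y`, and
`Step` below is the implication graph of these clauses. -/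
abbrev Lit (n : ℕ) := Fin n × Bool

def negLit (l : Lit n) : Lit n := (l.1, !l.2)

@[simp] lemma negLit_fst (l : Lit n) : (negLit l).1 = l.1 := rfl

@[simp] lemma negLit_snd (l : Lit n) : (negLit l).2 = !l.2 := rfl

@[simp] lemma negLit_negLit (l : Lit n) : negLit (negLit l) = l := by simp [negLit]

lemma negLit_ne_self (l : Lit n) : negLit l ≠ l := fun h => by
  simpa [negLit] using congrArg Prod.snd h

lemma eq_or_eq_negLit_of_fst_eq {l l' : Lit n} (h : l.1 = l'.1) : l' = l ∨ l' = negLit l := by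
  obtain ⟨v, b⟩ := l
  obtain ⟨v', b'⟩ := l'
  cases b <;> cases b' <;> simp_all [negLit]

def coloredEdge (l l' : Lit n) : Finset (Fin n) ⊕ Finset (Fin n) :=
  if l'.2 then .inl {l.1, l'.1} else .inr {l.1, l'.1}

variable (H₁ H₂) in
def Step (l l' : Lit n) : Prop :=
  l'.2 = !l.2 ∧ coloredEdge l l' ∈ H₁.disjSum H₂

variable (H₁ H₂) in
abbrev Reach : Lit n → Lit n → Prop := ReflTransGen (Step H₁ H₂)

lemma Step.negLit {l l' : Lit n} (h : Step H₁ H₂ l l') :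
    Step H₁ H₂ (negLit l') (negLit l) := by
  obtain ⟨hs, he⟩ := h
  refine ⟨by simp [hs], ?_⟩
  obtain ⟨v, b⟩ := l
  obtain ⟨v', b'⟩ := l'
  subst hs
  cases b <;> simpa [coloredEdge, DisjointCovers.negLit, Finset.pair_comm] using he

lemma Reach.negLit {l l' : Lit n} (h : Reach H₁ H₂ l l') :
    Reach H₁ H₂ (negLit l') (negLit l) := by
  induction h with
  | refl => exact .refl
  | tail _ hbc ih => exact ih.head hbc.negLit

lemma step_false_true {v w : Fin n} (h : {v, w} ∈ H₁) : Step H₁ H₂ (v, false) (w, true) := by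
  simpa [Step, coloredEdge] using h

lemma step_true_false {v w : Fin n} (h : {v, w} ∈ H₂) : Step H₁ H₂ (v, true) (w, false) := by
  simpa [Step, coloredEdge] using h

variable (H₁ H₂) in
structure IsClosedConsistent (T : Set (Lit n)) : Prop where
  closed : ∀ l ∈ T, ∀ l', Step H₁ H₂ l l' → l' ∈ T
  consistent : ∀ l ∈ T, negLit l ∉ T

namespace IsClosedConsistent

variable {T : Set (Lit n)}

lemma mem_of_reach (hT : IsClosedConsistent H₁ H₂ T) {l l' : Lit n} (hl : l ∈ T)
    (h : Reach H₁ H₂ l l') : l' ∈ T := by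
  induction h with
  | refl => exact hl
  | tail _ hbc ih => exact hT.closed _ ih _ hbc

lemma union_reach (hT : IsClosedConsistent H₁ H₂ T) {l : Lit n}
    (hl : ¬Reach H₁ H₂ l (negLit l)) (hlT : negLit l ∉ T) :
    IsClosedConsistent H₁ H₂ (T ∪ {l' | Reach H₁ H₂ l l'}) := by
  have hR : ∀ {l'}, Reach H₁ H₂ l l' → negLit l' ∉ T := fun h h' =>
    hlT (hT.mem_of_reach h' h.negLit)
  refine ⟨?_, ?_⟩
  · rintro l' (hl' | hl') l'' hstep
    exacts [Or.inl (hT.closed _ hl' _ hstep), Or.inr (hl'.tail hstep)]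
  · rintro l' (hl' | hl') (hneg | hneg)
    · exact hT.consistent _ hl' hneg
    · exact hR hneg (by simpa using hl')
    · exact hR hl' hneg
    · exact hl (hneg.trans (by simpa using hl'.negLit))

end IsClosedConsistent

lemma exists_isClosedConsistent
    (h : ∀ l : Lit n, ¬(Reach H₁ H₂ l (negLit l) ∧ Reach H₁ H₂ (negLit l) l))
    (S : Finset (Fin n)) :
    ∃ T, IsClosedConsistent H₁ H₂ T ∧ ∀ v ∈ S, ∃ b, (v, b) ∈ T := by
  induction S using Finset.induction_on with
  | empty => exact ⟨∅, ⟨by simp, by simp⟩, by simp⟩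
  | insert v S _ ih =>
    obtain ⟨T, hT, hS⟩ := ih
    by_cases hv : ∃ b, (v, b) ∈ T
    · refine ⟨T, hT, ?_⟩
      simp only [Finset.mem_insert, forall_eq_or_imp]
      exact ⟨hv, hS⟩
    simp only [not_exists] at hv
    obtain ⟨b, hb⟩ : ∃ b, ¬Reach H₁ H₂ (v, b) (negLit (v, b)) := by
      by_contra! hall
      exact h (v, true) ⟨hall true, by simpa [negLit] using hall false⟩
    refine ⟨_, hT.union_reach hb (hv _), ?_⟩
    simp only [Finset.mem_insert, forall_eq_or_imp]
    exact ⟨⟨b, Or.inr .refl⟩, fun w hw => (hS w hw).imp fun _ h => Or.inl h⟩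

theorem of_forall_not_reach (hH₁ : ∀ e ∈ H₁, e.card = 2) (hH₂ : ∀ e ∈ H₂, e.card = 2)
    (h : ∀ l : Lit n, ¬(Reach H₁ H₂ l (negLit l) ∧ Reach H₁ H₂ (negLit l) l)) :
    DisjointCovers H₁ H₂ := by
  obtain ⟨T, hT, htot⟩ := exists_isClosedConsistent h Finset.univ
  have hfalse : ∀ v, (v, true) ∉ T → (v, false) ∈ T := fun v hv => by
    obtain ⟨b, hb⟩ := htot v (Finset.mem_univ v)
    cases b
    exacts [hb, absurd hb hv]
  set C := Finset.univ.filter fun v => (v, true) ∈ T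
  refine ⟨C, Cᶜ, disjoint_compl_right, fun e he => ?_, fun e he => ?_⟩
  · obtain ⟨x, y, -, rfl⟩ := Finset.card_eq_two.1 (hH₁ e he)
    by_cases hx : x ∈ C
    · exact ⟨x, by simp, hx⟩
    refine ⟨y, by simp, ?_⟩
    have := hT.closed _ (hfalse x (by simpa [C] using hx)) _ (step_false_true he)
    simpa [C] using this
  · obtain ⟨x, y, -, rfl⟩ := Finset.card_eq_two.1 (hH₂ e he)
    by_cases hx : x ∈ C
    · refine ⟨y, by simp, ?_⟩
      have := hT.closed _ (by simpa [C] using hx) _ (step_true_false he)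
      simpa [C, negLit] using hT.consistent _ this
    · exact ⟨x, by simp, by simpa using hx⟩

/-- Take the walk shortest over all such `y`: a repeated literal could be cut out, and a
complementary pair would give a shorter such walk. -/
lemma exists_shortest_walk_to_negLit {x : Lit n} (h₁ : Reach H₁ H₂ x (negLit x))
    (h₂ : Reach H₁ H₂ (negLit x) x) :
    ∃ y k f, Reach H₁ H₂ (negLit y) y ∧ f 0 = y ∧ f k = negLit y ∧ IsWalk (Step H₁ H₂) f k ∧
      0 < k ∧ (Set.Iio k).InjOn fun i => (f i).1 := by
  have hex : ∃ k y f, Reach H₁ H₂ (negLit y) y ∧ f 0 = y ∧ f k = negLit y ∧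
      IsWalk (Step H₁ H₂) f k := by
    obtain ⟨k, f, hf0, hfk, hf⟩ := h₁.exists_isWalk
    exact ⟨k, x, f, h₂, hf0, hfk, hf⟩
  obtain ⟨y, f, hy, hf0, hfk, hf⟩ := Nat.find_spec hex
  have hk : 0 < Nat.find hex := Nat.pos_of_ne_zero fun h0 =>
    negLit_ne_self y (by rw [← hfk, h0, hf0])
  refine ⟨y, _, f, hy, hf0, hfk, hf, hk, injOn_of_lt_imp_ne fun i _ j hj hij he => ?_⟩
  have hjk : j < Nat.find hex := hj
  rcases eq_or_eq_negLit_of_fst_eq he with he | he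
  · obtain ⟨g, hg0, hgk, hg⟩ := hf.shortcut hij hjk.le he.symm
    exact Nat.find_min hex (by omega) ⟨y, g, hy, hg0.trans hf0, hgk.trans hfk, hg⟩
  · have hjy : Reach H₁ H₂ (f j) (negLit y) := by
      rw [← hfk]
      exact hf.reflTransGen hjk.le le_rfl
    have hyi : Reach H₁ H₂ y (f i) := by
      rw [← hf0]
      exact hf.reflTransGen (Nat.zero_le i) (by omega)
    refine Nat.find_min hex (show j - i < Nat.find hex by omega)
      ⟨f i, fun m => f (i + m), he ▸ hjy.trans (hy.trans hyi), rfl, ?_, (hf.shift i).mono ?_⟩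
    · simpa [show i + (j - i) = j by omega] using he
    · omega

variable (H₁ H₂) in
/-- The bicycles of the 2-SAT literature; `last_ne` excludes a walk that just goes round a cycle,
so that the `t + 1` steps use distinct clauses. -/
structure IsBicycle (W : ℕ → Lit n) (t : ℕ) : Prop where
  isWalk : IsWalk (Step H₁ H₂) W (t + 1)
  injOn : (Set.Icc 1 t).InjOn fun i => (W i).1
  exists_start : ∃ a ∈ Set.Icc 1 t, (W a).1 = (W 0).1
  exists_end : ∃ b ∈ Set.Icc 1 t, (W b).1 = (W (t + 1)).1
  last_ne : W (t + 1) ≠ W 1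

/-- Follow a shortest walk `¬y ⇝ y` into the walk `y ⇝ ¬y` above, and start the bicycle right
after the last vertex of the first walk that reappears later. -/
lemma exists_isBicycle {x : Lit n} (h₁ : Reach H₁ H₂ x (negLit x))
    (h₂ : Reach H₁ H₂ (negLit x) x) : ∃ t W, IsBicycle H₁ H₂ W t := by
  obtain ⟨y, k, f, hy, hf0, hfk, hf, hk, hfinj⟩ := exists_shortest_walk_to_negLit h₁ h₂
  obtain ⟨r, g, hg0, hgr, hg, hginj⟩ := hy.exists_isWalk_injOn
  have hr : 0 < r := Nat.pos_of_ne_zero fun h0 =>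
    negLit_ne_self y (by rw [← hg0, ← hgr, h0])
  set B : ℕ → Lit n := fun m => if m ≤ r then g m else f (m - r) with hB
  have hBwalk : IsWalk (Step H₁ H₂) B (r + k) := hg.append hf (hgr.trans hf0.symm)
  have hBf : ∀ m, r ≤ m → B m = f (m - r) := fun m hm => by
    rcases hm.eq_or_lt with rfl | hm
    · simp [hB, hgr, hf0]
    · simp [hB, show ¬m ≤ r by omega]
  have hBinj : (Set.Ico r (r + k)).InjOn fun m => (B m).1 := fun p hp q hq he => by
    simp only [Set.mem_Ico] at hp hq
    have := hfinj (show p - r < k by omega) (show q - r < k by omega)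
      (by simpa [hBf p hp.1, hBf q hq.1] using he)
    omega
  obtain ⟨j, hjr, hinj, q, hq, hjq⟩ := exists_lt_injOn_Ioo hr hBinj
    ⟨r, ⟨hr, by omega⟩, by simp [hB, hg0, hgr]⟩
  have hlast : B (r + k) = negLit y := by simp [hBf _ (Nat.le_add_right r k), hfk]
  have ht : j + (r + k - 1 - j + 1) = r + k := by omega
  refine ⟨r + k - 1 - j, fun m => B (j + m), ⟨(hBwalk.shift j).mono (by omega), ?_, ?_, ?_, ?_⟩⟩
  · intro a ha b hb hab
    simp only [Set.mem_Icc] at ha hb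
    have := hinj (x₁ := j + a) (x₂ := j + b) ⟨by omega, by omega⟩ ⟨by omega, by omega⟩ hab
    omega
  · exact ⟨q - j, ⟨by grind, by grind⟩, by simpa [show j + (q - j) = q by grind] using hjq⟩
  · refine ⟨r - j, ⟨by omega, by omega⟩, ?_⟩
    simp [show j + (r - j) = r by omega, ht, hlast, hBf r le_rfl, hf0]
  · simp only [ht, hlast]
    by_cases hj : j + 1 = r
    · rw [hj, hBf r le_rfl, Nat.sub_self, hf0]
      exact negLit_ne_self y
    · rw [show B (j + 1) = g (j + 1) from if_pos (by omega), ← hg0]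
      intro h
      have := hginj (by simp) (show j + 1 ∈ Set.Iic r by simp only [Set.mem_Iic]; omega) h
      omega

def walkEdges (W : ℕ → Lit n) (k : ℕ) : Finset (Finset (Fin n) ⊕ Finset (Fin n)) :=
  (Finset.range k).image fun i => coloredEdge (W i) (W (i + 1))

lemma walkEdges_subset_disjSum {W : ℕ → Lit n} {k : ℕ} (hW : IsWalk (Step H₁ H₂) W k) :
    walkEdges W k ⊆ H₁.disjSum H₂ := by
  simp only [walkEdges, Finset.image_subset_iff, Finset.mem_range]
  exact fun i hi => (hW i hi).2

/-- A coloured edge is the clause `¬l ∨ l'`, which it determines up to swapping the two sides. -/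
lemma eq_or_eq_negLit_of_coloredEdge_eq {l l' m m' : Lit n} (hl : l'.2 = !l.2)
    (hm : m'.2 = !m.2) (h : coloredEdge l l' = coloredEdge m m') :
    (l = m ∧ l' = m') ∨ (l = negLit m' ∧ l' = negLit m) := by
  obtain ⟨v, b⟩ := l
  obtain ⟨v', b'⟩ := l'
  obtain ⟨w, c⟩ := m
  obtain ⟨w', c'⟩ := m'
  simp only at hl hm
  subst hl hm
  obtain ⟨hpair, rfl⟩ : ({v, v'} : Finset (Fin n)) = {w, w'} ∧ b = c := by
    cases b <;> cases c <;> simp_all [coloredEdge]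
  have := congrArg (fun s : Finset (Fin n) => (s : Set (Fin n))) hpair
  simp only [Finset.coe_insert, Finset.coe_singleton, Set.pair_eq_pair_iff] at this
  rcases this with ⟨rfl, rfl⟩ | ⟨rfl, rfl⟩ <;> simp [negLit]

lemma IsBicycle.card_walkEdges {W : ℕ → Lit n} {t : ℕ} (hW : IsBicycle H₁ H₂ W t) :
    #(walkEdges W (t + 1)) = t + 1 := by
  rw [walkEdges, Finset.card_image_of_injOn, Finset.card_range]
  refine injOn_of_lt_imp_ne fun i hi j hj hij he => ?_
  simp only [Finset.coe_range, Set.mem_Iio] at hi hj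
  have hvar : ∀ {p q}, 1 ≤ p → p < q → q ≤ t → (W p).1 ≠ (W q).1 := fun hp hpq hq he => by
    have := hW.injOn ⟨hp, by omega⟩ ⟨by omega, hq⟩ he
    omega
  rcases eq_or_eq_negLit_of_coloredEdge_eq (hW.isWalk i hi).1 (hW.isWalk j hj).1 he with
    ⟨h0, h1⟩ | ⟨-, h1⟩
  · rcases Nat.eq_zero_or_pos i with rfl | hi0
    · by_cases hjt : j + 1 ≤ t
      · exact hvar le_rfl (by omega) hjt (congrArg Prod.fst h1)
      · exact hW.last_ne (by rw [show t = j by omega]; exact h1.symm)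
    · exact hvar hi0 hij (by omega) (congrArg Prod.fst h0)
  · by_cases h : i + 1 = j
    · subst h
      exact negLit_ne_self _ h1.symm
    · exact hvar (p := i + 1) (q := j) (by omega) (by omega) (by omega) (by rw [h1]; rfl)

lemma snd_eq_xor_bodd_of_isWalk {W : ℕ → Lit n} {k j : ℕ} (hW : IsWalk (Step H₁ H₂) W k)
    (hj : j ≤ k) : (W j).2 = ((W 0).2 ^^ j.bodd) := by
  induction j with
  | zero => simp
  | succ j ih => rw [(hW j (by omega)).1, ih (by omega), Nat.bodd_succ, Bool.xor_not]

lemma IsBicycle.le_card {W : ℕ → Lit n} {t : ℕ} (hW : IsBicycle H₁ H₂ W t) : t ≤ n := by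
  simpa using Fintype.card_le_of_injective (fun i : Fin t => (W (i + 1)).1)
    fun i j h => Fin.ext (by simpa using hW.injOn ⟨by omega, i.2⟩ ⟨by omega, j.2⟩ h)

/-- Since signs alternate along a walk, a bicycle through `t` vertices is determined by its
vertices `g`, the positions `a`, `b` its ends return to and its first sign `s`; so there are at
most `2 t² nᵗ` of them. -/
def bicycleWalk {t : ℕ} (g : Fin t → Fin n) (a b : Fin t) (s : Bool) (j : ℕ) : Lit n :=
  (if h₀ : j = 0 then g a else if h : j ≤ t then g ⟨j - 1, by omega⟩ else g b, s ^^ j.bodd)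

lemma IsBicycle.exists_eq_bicycleWalk {W : ℕ → Lit n} {t : ℕ} (hW : IsBicycle H₁ H₂ W t) :
    ∃ (g : Fin t → Fin n) (a b : Fin t) (s : Bool), ∀ j ≤ t + 1, bicycleWalk g a b s j = W j := by
  obtain ⟨a, ha, hWa⟩ := hW.exists_start
  obtain ⟨b, hb, hWb⟩ := hW.exists_end
  refine ⟨fun i => (W (i + 1)).1, ⟨a - 1, by grind⟩, ⟨b - 1, by grind⟩, (W 0).2,
    fun j hj => Prod.ext ?_ (snd_eq_xor_bodd_of_isWalk hW.isWalk hj).symm⟩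
  simp only [bicycleWalk]
  split_ifs with h₀ h
  · simpa [h₀, Nat.sub_add_cancel ha.1] using hWa
  · simp [Nat.sub_add_cancel (Nat.one_le_iff_ne_zero.2 h₀)]
  · simpa [Nat.sub_add_cancel hb.1, show j = t + 1 by omega] using hWb

theorem exists_bicycleWalk_of_not_disjointCovers (hH₁ : ∀ e ∈ H₁, e.card = 2)
    (hH₂ : ∀ e ∈ H₂, e.card = 2) (h : ¬DisjointCovers H₁ H₂) :
    ∃ t ≤ n, ∃ (g : Fin t → Fin n) (a b : Fin t) (s : Bool),
      #(walkEdges (bicycleWalk g a b s) (t + 1)) = t + 1 ∧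
        walkEdges (bicycleWalk g a b s) (t + 1) ⊆ H₁.disjSum H₂ := by
  obtain ⟨x, hx₁, hx₂⟩ : ∃ x, Reach H₁ H₂ x (negLit x) ∧ Reach H₁ H₂ (negLit x) x := by
    by_contra! hno
    exact h (of_forall_not_reach hH₁ hH₂ fun l hl => hno l hl.1 hl.2)
  obtain ⟨t, W, hW⟩ := exists_isBicycle hx₁ hx₂
  obtain ⟨g, a, b, s, hgW⟩ := hW.exists_eq_bicycleWalk
  have hE : walkEdges (bicycleWalk g a b s) (t + 1) = walkEdges W (t + 1) :=
    Finset.image_congr fun i hi => by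
      simp only [coe_range, Set.mem_Iio] at hi
      simp only [hgW i (by omega), hgW (i + 1) (by omega)]
  exact ⟨t, hW.le_card, g, a, b, s, hE ▸ hW.card_walkEdges,
    hE ▸ walkEdges_subset_disjSum hW.isWalk⟩

/-- The `t`-th summand bounds the expected number of bicycles through `t` vertices. -/
theorem card_filter_not_disjointCovers_le (n m : ℕ) :
    (#((hypSpace n 2 m ×ˢ hypSpace n 2 m).filter fun p => ¬DisjointCovers p.1 p.2) : ℝ) ≤
      (∑ t ∈ range (n + 1), 2 * (t : ℝ) ^ 2 * n ^ t * ((m : ℝ) / n.choose 2) ^ (t + 1)) *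
        #(hypSpace n 2 m) ^ 2 := by
  set hs := hypSpace n 2 m
  set E := fun (t : ℕ) (c : (Fin t → Fin n) × Fin t × Fin t × Bool) =>
    walkEdges (bicycleWalk c.1 c.2.1 c.2.2.1 c.2.2.2) (t + 1)
  have hsub : (hs ×ˢ hs).filter (fun p => ¬DisjointCovers p.1 p.2) ⊆
      (range (n + 1)).biUnion fun t => ((univ.filter fun c => #(E t c) = t + 1).biUnion
        fun c => (hs ×ˢ hs).filter fun p => E t c ⊆ p.1.disjSum p.2) := by
    intro p hp
    obtain ⟨hmem, hbad⟩ := mem_filter.1 hp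
    obtain ⟨hp₁, hp₂⟩ := mem_product.1 hmem
    obtain ⟨t, ht, g, a, b, s, hcard, hE⟩ := exists_bicycleWalk_of_not_disjointCovers
      (mem_filter.1 hp₁).2.1 (mem_filter.1 hp₂).2.1 hbad
    simp only [mem_biUnion, mem_range]
    exact ⟨t, by omega, (g, a, b, s), mem_filter.2 ⟨mem_univ _, hcard⟩, mem_filter.2 ⟨hmem, hE⟩⟩
  have hterm : ∀ t, ∀ c ∈ univ.filter fun c => #(E t c) = t + 1,
      (#((hs ×ˢ hs).filter fun p => E t c ⊆ p.1.disjSum p.2) : ℝ) ≤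
        ((m : ℝ) / n.choose 2) ^ (t + 1) * #hs ^ 2 := fun t c hc => by
    simpa [(mem_filter.1 hc).2] using card_filter_subset_disjSum_le n 2 m (E t c)
  calc _ ≤ ∑ t ∈ range (n + 1), ∑ c ∈ univ.filter (fun c => #(E t c) = t + 1),
        (#((hs ×ˢ hs).filter fun p => E t c ⊆ p.1.disjSum p.2) : ℝ) := by
        exact_mod_cast (card_le_card hsub).trans
          (card_biUnion_le.trans (sum_le_sum fun t _ => card_biUnion_le))
    _ ≤ ∑ t ∈ range (n + 1), ∑ c : (Fin t → Fin n) × Fin t × Fin t × Bool,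
        ((m : ℝ) / n.choose 2) ^ (t + 1) * #hs ^ 2 :=
        sum_le_sum fun t _ => ((sum_le_sum (hterm t)).trans
          (sum_le_sum_of_subset_of_nonneg (filter_subset _ _) fun _ _ _ => by positivity))
    _ = _ := by
        rw [sum_mul]
        refine sum_congr rfl fun t _ => ?_
        simp only [sum_const, card_univ, Fintype.card_prod, Fintype.card_fun, Fintype.card_fin,
          Fintype.card_bool, nsmul_eq_mul]
        push_cast
        ring

end DisjointCovers

lemma probDC_le_one (n k m : ℕ) : probDC n k m ≤ 1 :=
  div_le_one_of_le₀ (by exact_mod_cast card_filter_le _ _) (Nat.cast_nonneg _)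

lemma one_sub_le_probDC {n k m : ℕ} {δ : ℝ} (hpos : 0 < #(hypSpace n k m))
    (hbad : (#((hypSpace n k m ×ˢ hypSpace n k m).filter fun p => ¬DisjointCovers p.1 p.2) : ℝ) ≤
      δ * #(hypSpace n k m) ^ 2) :
    1 - δ ≤ probDC n k m := by
  have hsplit := card_filter_add_card_filter_not (s := hypSpace n k m ×ˢ hypSpace n k m)
    (fun p => DisjointCovers p.1 p.2)
  rw [card_product] at hsplit
  have hsplit' := congrArg (Nat.cast : ℕ → ℝ) hsplit
  push_cast at hsplit'
  rw [probDC, card_product, Nat.cast_mul, le_div_iff₀ (by positivity)]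
  linarith

lemma sum_mul_pow_le_tsum {n : ℕ} {p r : ℝ} (hp : 0 ≤ p) (hnp : n * p ≤ r) (hr : r < 1) (N : ℕ) :
    ∑ t ∈ range N, 2 * (t : ℝ) ^ 2 * n ^ t * p ^ (t + 1) ≤
      2 * p * ∑' t : ℕ, (t : ℝ) ^ 2 * r ^ t := by
  have hr0 : 0 ≤ r := (by positivity : (0 : ℝ) ≤ n * p).trans hnp
  have hsum : Summable fun t : ℕ => (t : ℝ) ^ 2 * r ^ t :=
    summable_pow_mul_geometric_of_norm_lt_one 2 (by rwa [Real.norm_of_nonneg hr0])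
  calc ∑ t ∈ range N, 2 * (t : ℝ) ^ 2 * n ^ t * p ^ (t + 1)
      = 2 * p * ∑ t ∈ range N, (t : ℝ) ^ 2 * (n * p) ^ t := by
        rw [mul_sum]
        exact sum_congr rfl fun t _ => by ring
    _ ≤ 2 * p * ∑ t ∈ range N, (t : ℝ) ^ 2 * r ^ t := by
        gcongr
    _ ≤ 2 * p * ∑' t : ℕ, (t : ℝ) ^ 2 * r ^ t := by
        gcongr
        exact hsum.sum_le_tsum _ fun t _ => by positivity

lemma one_sub_le_probDC_two {n m : ℕ} {r : ℝ} (hmn : m ≤ n.choose 2)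
    (hnp : n * ((m : ℝ) / n.choose 2) ≤ r) (hr : r < 1) :
    1 - 2 * ((m : ℝ) / n.choose 2) * ∑' t : ℕ, (t : ℝ) ^ 2 * r ^ t ≤ probDC n 2 m := by
  refine one_sub_le_probDC (by rw [card_hypSpace]; exact Nat.choose_pos hmn) ?_
  exact (DisjointCovers.card_filter_not_disjointCovers_le n m).trans
    (by gcongr; exact sum_mul_pow_le_tsum (by positivity) hnp hr _)

lemma one_sub_div_le_probDC_two {ε : ℝ} {n m : ℕ} (hn : 2 ≤ n) (hεn : 1 ≤ ε * n)
    (hm : (m : ℝ) ≤ (1 / 2 - ε) * n) :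
    1 - 2 * (∑' t : ℕ, (t : ℝ) ^ 2 * (1 - ε) ^ t) / n ≤ probDC n 2 m := by
  have hn' : (2 : ℝ) ≤ n := by exact_mod_cast hn
  have hm0 : (0 : ℝ) ≤ m := m.cast_nonneg
  have hε : 0 < ε := by nlinarith
  have hchoose : (n.choose 2 : ℝ) = n * (n - 1) / 2 := Nat.cast_choose_two ℝ n
  have hmn : m ≤ n.choose 2 := by
    have : (m : ℝ) ≤ n.choose 2 := by rw [hchoose]; nlinarith
    exact_mod_cast this
  have hnp : n * ((m : ℝ) / n.choose 2) ≤ 1 - ε := by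
    rw [hchoose, mul_div_assoc', div_le_iff₀ (by nlinarith)]
    nlinarith
  refine le_trans ?_ (one_sub_le_probDC_two hmn hnp (by linarith))
  set K := ∑' t : ℕ, (t : ℝ) ^ 2 * (1 - ε) ^ t
  have hK : 0 ≤ K := tsum_nonneg fun t => mul_nonneg (by positivity) (pow_nonneg (by nlinarith) t)
  have hp : (m : ℝ) / n.choose 2 ≤ 1 / n := by
    rw [le_div_iff₀ (by linarith)]
    linarith
  calc 1 - 2 * K / n = 1 - 2 * (1 / n) * K := by ring
    _ ≤ 1 - 2 * ((m : ℝ) / n.choose 2) * K := by gcongr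

/-- If `m(n) ≤ (1/2 − ε)n`, two independent random graphs distributed as
`G(n, m(n))` admit disjoint covers with probability tending to `1`. -/
theorem disjoint_covers_graphs_subcritical (ε : ℝ) (hε : 0 < ε) (m : ℕ → ℕ)
    (hm : ∀ n, (m n : ℝ) ≤ (1 / 2 - ε) * n) :
    Tendsto (fun n => probDC n 2 (m n)) atTop (nhds 1) := by
  set K := ∑' t : ℕ, (t : ℝ) ^ 2 * (1 - ε) ^ t
  have hlower : ∀ᶠ n : ℕ in atTop, 1 - 2 * K / n ≤ probDC n 2 (m n) := by
    filter_upwards [eventually_ge_atTop 2,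
      tendsto_natCast_atTop_atTop.eventually_ge_atTop ε⁻¹] with n hn hεn
    refine one_sub_div_le_probDC_two hn ?_ (hm n)
    calc 1 = ε * ε⁻¹ := (mul_inv_cancel₀ hε.ne').symm
      _ ≤ ε * n := by gcongr
  have hlim : Tendsto (fun n : ℕ => 1 - 2 * K / n) atTop (nhds 1) := by
    simpa using (tendsto_const_div_atTop_nhds_zero_nat (2 * K)).const_sub 1
  exact tendsto_of_tendsto_of_tendsto_of_le_of_le' hlim tendsto_const_nhds hlower
    (.of_forall fun n => probDC_le_one n 2 (m n))
end

section
/- Fix an integer k ≥ 2 and constants t ∈ ℕ and c > 0, and let p(n) ≤ c·n^{1−k} for all n. Let H₁ and H₂ be two independent random k-uniform hypergraphs on vertex set {1,…,n}, each distributed as H_k(n, p(n)). Then with probability tending to 1 as n → ∞, for every set B ⊆ {1,…,n} with |B| ≤ t, the subhypergraphs of H₁ and of H₂ consisting of the edges entirely contained in B admit disjoint covers. -/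
open Filter Finset

open scoped Classical

/-- All possible edges of a `k`-uniform hypergraph on `{1,…,n}`. -/
noncomputable def allEdges (n k : ℕ) : Finset (Finset (Fin n)) :=
  Finset.univ.filter (fun e => e.card = k)

/-- The probability, under two independent copies of the binomial random
`k`-uniform hypergraph `H_k(n,p)` (each possible edge present independently
with probability `p`), that the pair `(H₁, H₂)` satisfies `P`. -/
noncomputable def probPair (n k : ℕ) (p : ℝ)
    (P : Finset (Finset (Fin n)) → Finset (Finset (Fin n)) → Prop) : ℝ :=
  ∑ H₁ ∈ (allEdges n k).powerset, ∑ H₂ ∈ (allEdges n k).powerset,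
    if P H₁ H₂ then
      (p ^ H₁.card * (1 - p) ^ ((allEdges n k).card - H₁.card)) *
        (p ^ H₂.card * (1 - p) ^ ((allEdges n k).card - H₂.card))
    else 0

/-!
By Hall's theorem, the edges of `H₁[B]` and `H₂[B]` have distinct representatives, which then
form disjoint covers, as soon as every `S ⊆ B` spans at most `|S|` edges of `H₁` and `H₂`
together. A set `S` with `|S| ≤ t` spanning `|S| + 1` of them contains one of at most
`(2 ^ 2 ^ t) ^ 2` edge configurations, each present with probability `p ^ (|S| + 1)`. Summing over
all `S` bounds the failure probability by `(2 ^ 2 ^ t) ^ 2 · p (1 + p) ^ n`, which is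
`O(e ^ c / n)` because `k ≥ 2` gives `p ≤ c / n`.
-/

section BernoulliWeight

variable {α : Type*}

/-- The probability that the `p`-random subset of `E` equals `H` (for `H ⊆ E`). -/
def bernoulliWeight (E : Finset α) (p : ℝ) (H : Finset α) : ℝ :=
  p ^ #H * (1 - p) ^ (#E - #H)

lemma bernoulliWeight_nonneg {E : Finset α} {p : ℝ} (hp0 : 0 ≤ p) (hp1 : p ≤ 1) (H : Finset α) :
    0 ≤ bernoulliWeight E p H := by
  have : 0 ≤ 1 - p := by linarith
  unfold bernoulliWeight
  positivity

lemma sum_bernoulliWeight (E : Finset α) (p : ℝ) :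
    ∑ H ∈ E.powerset, bernoulliWeight E p H = 1 := by
  simp only [bernoulliWeight, sum_pow_mul_eq_add_pow, add_sub_cancel, one_pow]

lemma sum_bernoulliWeight_superset [DecidableEq α] {E F : Finset α} (hF : F ⊆ E) (p : ℝ) :
    ∑ H ∈ E.powerset with F ⊆ H, bernoulliWeight E p H = p ^ #F := by
  have hIcc : {H ∈ E.powerset | F ⊆ H} = Icc F E := by
    ext H; simp [and_comm]
  have hdisj : ∀ G ∈ (E \ F).powerset, Disjoint F G := fun G hG =>
    disjoint_of_subset_right (mem_powerset.1 hG) disjoint_sdiff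
  rw [hIcc, Icc_eq_image_powerset hF, sum_image]
  · calc ∑ G ∈ (E \ F).powerset, bernoulliWeight E p (F ∪ G)
        = ∑ G ∈ (E \ F).powerset, p ^ #F * (p ^ #G * (1 - p) ^ (#(E \ F) - #G)) := by
          refine sum_congr rfl fun G hG => ?_
          rw [bernoulliWeight, card_union_of_disjoint (hdisj G hG), card_sdiff_of_subset hF,
            pow_add, mul_assoc]
          congr 3
          have := card_le_card hF
          omega
      _ = p ^ #F := by rw [← mul_sum, sum_pow_mul_eq_add_pow, add_sub_cancel, one_pow, mul_one]
  · intro G hG G' hG' h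
    rw [← union_sdiff_cancel_left (hdisj G hG), ← union_sdiff_cancel_left (hdisj G' hG')]
    exact congrArg (· \ F) h

end BernoulliWeight

lemma exists_subsets_card_add_eq {α β : Type*} {A : Finset α} {B : Finset β} {m : ℕ}
    (h : m ≤ #A + #B) : ∃ A' ⊆ A, ∃ B' ⊆ B, #A' + #B' = m := by
  obtain ⟨A', hA', hA'card⟩ := exists_subset_card_eq (min_le_left #A m)
  obtain ⟨B', hB', hB'card⟩ := exists_subset_card_eq (show m - min #A m ≤ #B by omega)
  exact ⟨A', hA', B', hB', by omega⟩

/-- Distinct representatives (Hall's theorem) of the edges of `H₁` and `H₂` form disjoint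
covers. -/
theorem disjointCovers_of_hall {n : ℕ} {H₁ H₂ : Finset (Finset (Fin n))}
    (h : ∀ S : Finset (Fin n), #{e ∈ H₁ | e ⊆ S} + #{e ∈ H₂ | e ⊆ S} ≤ #S) :
    DisjointCovers H₁ H₂ := by
  let edge : H₁ ⊕ H₂ → Finset (Fin n) := Sum.elim Subtype.val Subtype.val
  have hall : ∀ s : Finset (H₁ ⊕ H₂), #s ≤ #(s.biUnion edge) := by
    intro s
    set U := s.biUnion edge
    calc #s ≤ #({e ∈ H₁ | e ⊆ U}.disjSum {e ∈ H₂ | e ⊆ U}) := by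
          refine card_le_card_of_injOn (Sum.map Subtype.val Subtype.val) (fun x hx => ?_)
            (Sum.map_injective.2 ⟨Subtype.val_injective, Subtype.val_injective⟩).injOn
          have hxU : edge x ⊆ U := subset_biUnion_of_mem edge hx
          rcases x with ⟨e, he⟩ | ⟨e, he⟩ <;> simpa [edge, he] using hxU
      _ = #{e ∈ H₁ | e ⊆ U} + #{e ∈ H₂ | e ⊆ U} := card_disjSum _ _
      _ ≤ #U := h U
  obtain ⟨f, hf_inj, hf_mem⟩ := (all_card_le_biUnion_card_iff_exists_injective edge).1 hall
  refine ⟨univ.image (f ∘ Sum.inl), univ.image (f ∘ Sum.inr), ?_,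
    fun e he => ⟨f (.inl ⟨e, he⟩), hf_mem _, mem_image_of_mem _ (mem_univ _)⟩,
    fun e he => ⟨f (.inr ⟨e, he⟩), hf_mem _, mem_image_of_mem _ (mem_univ _)⟩⟩
  simp only [disjoint_left, mem_image, mem_univ, true_and, Function.comp_apply]
  rintro _ ⟨_, rfl⟩ ⟨_, he⟩
  exact Sum.inr_ne_inl (hf_inj he)

theorem disjointCovers_filter_subset_of_sparse {n t : ℕ} {H₁ H₂ : Finset (Finset (Fin n))}
    (hsparse : ∀ S : Finset (Fin n), #S ≤ t → #{e ∈ H₁ | e ⊆ S} + #{e ∈ H₂ | e ⊆ S} ≤ #S)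
    {B : Finset (Fin n)} (hB : #B ≤ t) :
    DisjointCovers {e ∈ H₁ | e ⊆ B} {e ∈ H₂ | e ⊆ B} := by
  refine disjointCovers_of_hall fun S => ?_
  simp only [filter_filter, ← subset_inter_iff]
  calc _ ≤ #(B ∩ S) := hsparse _ ((card_le_card inter_subset_left).trans hB)
    _ ≤ #S := card_le_card inter_subset_right

section probPair

variable {n k : ℕ} {p : ℝ}

lemma probPair_eq_sum_ite (P : Finset (Finset (Fin n)) → Finset (Finset (Fin n)) → Prop) :
    probPair n k p P = ∑ H₁ ∈ (allEdges n k).powerset, ∑ H₂ ∈ (allEdges n k).powerset,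
      if P H₁ H₂ then bernoulliWeight (allEdges n k) p H₁ * bernoulliWeight (allEdges n k) p H₂
      else 0 :=
  rfl

lemma probPair_eq_sum_filter (P : Finset (Finset (Fin n)) → Finset (Finset (Fin n)) → Prop) :
    probPair n k p P = ∑ H ∈ (allEdges n k).powerset ×ˢ (allEdges n k).powerset with P H.1 H.2,
      bernoulliWeight (allEdges n k) p H.1 * bernoulliWeight (allEdges n k) p H.2 := by
  rw [sum_filter, sum_product]
  rfl

lemma probPair_nonneg (hp0 : 0 ≤ p) (hp1 : p ≤ 1)
    (P : Finset (Finset (Fin n)) → Finset (Finset (Fin n)) → Prop) :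
    0 ≤ probPair n k p P := by
  rw [probPair_eq_sum_filter]
  exact sum_nonneg fun H _ =>
    mul_nonneg (bernoulliWeight_nonneg hp0 hp1 _) (bernoulliWeight_nonneg hp0 hp1 _)

lemma probPair_add_probPair_not (P : Finset (Finset (Fin n)) → Finset (Finset (Fin n)) → Prop) :
    probPair n k p P + probPair n k p (fun H₁ H₂ => ¬ P H₁ H₂) = 1 := by
  rw [probPair_eq_sum_filter, probPair_eq_sum_filter, sum_filter_add_sum_filter_not, sum_product,
    ← sum_mul_sum, sum_bernoulliWeight, one_mul]

lemma probPair_mono (hp0 : 0 ≤ p) (hp1 : p ≤ 1)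
    {P Q : Finset (Finset (Fin n)) → Finset (Finset (Fin n)) → Prop}
    (h : ∀ H₁ ∈ (allEdges n k).powerset, ∀ H₂ ∈ (allEdges n k).powerset,
      P H₁ H₂ → Q H₁ H₂) :
    probPair n k p P ≤ probPair n k p Q := by
  rw [probPair_eq_sum_filter, probPair_eq_sum_filter]
  refine sum_le_sum_of_subset_of_nonneg (fun H hH => ?_) fun H _ _ =>
    mul_nonneg (bernoulliWeight_nonneg hp0 hp1 _) (bernoulliWeight_nonneg hp0 hp1 _)
  simp only [mem_filter, mem_product] at hH ⊢
  exact ⟨hH.1, h _ hH.1.1 _ hH.1.2 hH.2⟩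

lemma probPair_exists_le_sum (hp0 : 0 ≤ p) (hp1 : p ≤ 1) {ι : Type*} (I : Finset ι)
    (Q : ι → Finset (Finset (Fin n)) → Finset (Finset (Fin n)) → Prop) :
    probPair n k p (fun H₁ H₂ => ∃ i ∈ I, Q i H₁ H₂) ≤ ∑ i ∈ I, probPair n k p (Q i) := by
  simp only [probPair_eq_sum_ite]
  calc _ ≤ ∑ H₁ ∈ (allEdges n k).powerset, ∑ H₂ ∈ (allEdges n k).powerset, ∑ i ∈ I,
        if Q i H₁ H₂ then bernoulliWeight (allEdges n k) p H₁ * bernoulliWeight (allEdges n k) p H₂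
        else 0 :=
        sum_le_sum fun H₁ _ => sum_le_sum fun H₂ _ => by
          have hw := mul_nonneg (bernoulliWeight_nonneg (E := allEdges n k) hp0 hp1 H₁)
            (bernoulliWeight_nonneg (E := allEdges n k) hp0 hp1 H₂)
          have hterm : ∀ i ∈ I, 0 ≤ if Q i H₁ H₂ then
              bernoulliWeight (allEdges n k) p H₁ * bernoulliWeight (allEdges n k) p H₂ else 0 :=
            fun i _ => by split_ifs <;> simp [hw]
          split_ifs with h
          · obtain ⟨i, hi, hQ⟩ := h
            exact (if_pos hQ).symm.le.trans (single_le_sum hterm hi)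
          · exact sum_nonneg hterm
    _ = _ := (sum_congr rfl fun _ _ => sum_comm).trans sum_comm

lemma probPair_superset_superset {F₁ F₂ : Finset (Finset (Fin n))}
    (hF₁ : F₁ ⊆ allEdges n k) (hF₂ : F₂ ⊆ allEdges n k) :
    probPair n k p (fun H₁ H₂ => F₁ ⊆ H₁ ∧ F₂ ⊆ H₂) = p ^ #F₁ * p ^ #F₂ := by
  rw [probPair_eq_sum_ite, ← sum_bernoulliWeight_superset hF₁, ← sum_bernoulliWeight_superset hF₂,
    sum_filter, sum_filter, sum_mul_sum]
  refine sum_congr rfl fun H₁ _ => sum_congr rfl fun H₂ _ => ?_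
  split_ifs <;> simp_all

lemma probPair_dense_le (hp0 : 0 ≤ p) (hp1 : p ≤ 1) {t : ℕ} {S : Finset (Fin n)} (hS : #S ≤ t) :
    probPair n k p (fun H₁ H₂ => #S + 1 ≤ #{e ∈ H₁ | e ⊆ S} + #{e ∈ H₂ | e ⊆ S})
      ≤ (2 ^ 2 ^ t) ^ 2 * p ^ (#S + 1) := by
  set witnesses := {F ∈ S.powerset.powerset ×ˢ S.powerset.powerset |
    F.1 ⊆ allEdges n k ∧ F.2 ⊆ allEdges n k ∧ #F.1 + #F.2 = #S + 1}
  have hwitnesses : #witnesses ≤ (2 ^ 2 ^ t) ^ 2 :=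
    calc #witnesses ≤ #(S.powerset.powerset ×ˢ S.powerset.powerset) := card_filter_le _ _
      _ = (2 ^ 2 ^ #S) ^ 2 := by rw [card_product, card_powerset, card_powerset, sq]
      _ ≤ (2 ^ 2 ^ t) ^ 2 := by gcongr <;> norm_num
  calc _ ≤ probPair n k p (fun H₁ H₂ => ∃ F ∈ witnesses, F.1 ⊆ H₁ ∧ F.2 ⊆ H₂) := by
        refine probPair_mono hp0 hp1 fun H₁ hH₁ H₂ hH₂ hdense => ?_
        obtain ⟨F₁, hF₁, F₂, hF₂, hcard⟩ := exists_subsets_card_add_eq hdense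
        refine ⟨(F₁, F₂), ?_, hF₁.trans (filter_subset _ _), hF₂.trans (filter_subset _ _)⟩
        have hsub : ∀ H ∈ (allEdges n k).powerset, ∀ F ⊆ {e ∈ H | e ⊆ S},
            F ∈ S.powerset.powerset ∧ F ⊆ allEdges n k := fun H hH F hF =>
          ⟨mem_powerset.2 fun e he => mem_powerset.2 (mem_filter.1 (hF he)).2,
            hF.trans ((filter_subset _ _).trans (mem_powerset.1 hH))⟩
        simp only [witnesses, mem_filter, mem_product]
        exact ⟨⟨(hsub H₁ hH₁ F₁ hF₁).1, (hsub H₂ hH₂ F₂ hF₂).1⟩,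
          (hsub H₁ hH₁ F₁ hF₁).2, (hsub H₂ hH₂ F₂ hF₂).2, hcard⟩
    _ ≤ ∑ F ∈ witnesses, probPair n k p (fun H₁ H₂ => F.1 ⊆ H₁ ∧ F.2 ⊆ H₂) :=
        probPair_exists_le_sum hp0 hp1 _ _
    _ = ∑ F ∈ witnesses, p ^ (#S + 1) := by
        refine sum_congr rfl fun F hF => ?_
        simp only [witnesses, mem_filter] at hF
        rw [probPair_superset_superset hF.2.1 hF.2.2.1, ← pow_add, hF.2.2.2]
    _ ≤ (2 ^ 2 ^ t) ^ 2 * p ^ (#S + 1) := by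
        rw [sum_const, nsmul_eq_mul]
        gcongr
        exact_mod_cast hwitnesses

lemma probPair_not_forall_disjointCovers_le (hp0 : 0 ≤ p) (hp1 : p ≤ 1) (t : ℕ) :
    probPair n k p (fun H₁ H₂ => ¬ ∀ B : Finset (Fin n), #B ≤ t →
        DisjointCovers {e ∈ H₁ | e ⊆ B} {e ∈ H₂ | e ⊆ B})
      ≤ (2 ^ 2 ^ t) ^ 2 * p * (1 + p) ^ n := by
  calc _ ≤ probPair n k p (fun H₁ H₂ => ∃ S ∈ (univ : Finset (Finset (Fin n))).filter (#· ≤ t),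
          #S + 1 ≤ #{e ∈ H₁ | e ⊆ S} + #{e ∈ H₂ | e ⊆ S}) := by
        refine probPair_mono hp0 hp1 fun H₁ _ H₂ _ hfail => ?_
        contrapose! hfail
        refine fun B hB => disjointCovers_filter_subset_of_sparse (fun S hS => ?_) hB
        have := hfail S (mem_filter.2 ⟨mem_univ S, hS⟩)
        omega
    _ ≤ ∑ S ∈ (univ : Finset (Finset (Fin n))).filter (#· ≤ t), probPair n k p
          (fun H₁ H₂ => #S + 1 ≤ #{e ∈ H₁ | e ⊆ S} + #{e ∈ H₂ | e ⊆ S}) :=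
        probPair_exists_le_sum hp0 hp1 _ _
    _ ≤ ∑ S ∈ (univ : Finset (Finset (Fin n))).filter (#· ≤ t), (2 ^ 2 ^ t) ^ 2 * p ^ (#S + 1) :=
        sum_le_sum fun S hS => probPair_dense_le hp0 hp1 (mem_filter.1 hS).2
    _ ≤ ∑ S ∈ (univ : Finset (Fin n)).powerset, (2 ^ 2 ^ t) ^ 2 * p ^ (#S + 1) :=
        sum_le_sum_of_subset_of_nonneg (by simp) fun _ _ _ => by positivity
    _ = (2 ^ 2 ^ t) ^ 2 * p * ∑ S ∈ (univ : Finset (Fin n)).powerset, p ^ #S * 1 ^ (#univ - #S) :=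
        by rw [mul_sum]; exact sum_congr rfl fun S _ => by ring
    _ = (2 ^ 2 ^ t) ^ 2 * p * (1 + p) ^ n := by
        rw [sum_pow_mul_eq_add_pow, card_univ, Fintype.card_fin, add_comm]

end probPair

lemma mul_zpow_one_sub_le_div {c : ℝ} (hc : 0 ≤ c) {k : ℕ} (hk : 2 ≤ k) (n : ℕ) :
    c * (n : ℝ) ^ (1 - (k : ℤ)) ≤ c / n := by
  rcases n.eq_zero_or_pos with rfl | hn
  · simp [zero_zpow _ (show 1 - (k : ℤ) ≠ 0 by omega)]
  · rw [div_eq_mul_inv, ← zpow_neg_one]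
    gcongr
    · exact_mod_cast hn
    · omega

lemma one_add_pow_le_exp {c x : ℝ} {n : ℕ} (hc : 0 ≤ c) (hx0 : 0 ≤ x) (hx : x ≤ c / n) :
    (1 + x) ^ n ≤ Real.exp c := by
  have hnx : n * x ≤ c := by
    rcases n.eq_zero_or_pos with rfl | hn
    · simpa using hc
    · exact (le_div_iff₀' (by exact_mod_cast hn)).1 hx
  calc (1 + x) ^ n ≤ Real.exp x ^ n := by gcongr; linarith [Real.add_one_le_exp x]
    _ = Real.exp (n * x) := (Real.exp_nat_mul x n).symm
    _ ≤ Real.exp c := Real.exp_le_exp.2 hnx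

/-- For `k ≥ 2`, fixed `t` and `c > 0`, if `p(n) ≤ c·n^(1−k)`, then with
probability tending to `1` every set `B` of at most `t` vertices is such that
the edges of `H₁` and of `H₂` spanned inside `B` admit disjoint covers. -/
theorem small_sets_have_disjoint_covers (k : ℕ) (hk : 2 ≤ k) (t : ℕ)
    (c : ℝ) (hc : 0 < c) (p : ℕ → ℝ) (hp0 : ∀ n, 0 ≤ p n) (hp1 : ∀ n, p n ≤ 1)
    (hp : ∀ n, p n ≤ c * (n : ℝ) ^ (1 - (k : ℤ))) :
    Tendsto (fun n => probPair n k (p n)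
        (fun H₁ H₂ => ∀ B : Finset (Fin n), B.card ≤ t →
          DisjointCovers (H₁.filter (fun e => e ⊆ B))
            (H₂.filter (fun e => e ⊆ B))))
      atTop (nhds 1) := by
  set K : ℝ := (2 ^ 2 ^ t) ^ 2
  have hfail : Tendsto (fun n => probPair n k (p n) (fun H₁ H₂ => ¬ ∀ B : Finset (Fin n),
      #B ≤ t → DisjointCovers {e ∈ H₁ | e ⊆ B} {e ∈ H₂ | e ⊆ B})) atTop (nhds 0) := by
    refine squeeze_zero (fun n => probPair_nonneg (hp0 n) (hp1 n) _) (fun n => ?_)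
      (tendsto_const_div_atTop_nhds_zero_nat (K * c * Real.exp c))
    have hpn : p n ≤ c / n := (hp n).trans (mul_zpow_one_sub_le_div hc.le hk n)
    calc _ ≤ K * p n * (1 + p n) ^ n := probPair_not_forall_disjointCovers_le (hp0 n) (hp1 n) t
      _ ≤ K * (c / n) * Real.exp c := by
          have hpn0 := hp0 n
          gcongr
          exact one_add_pow_le_exp hc.le hpn0 hpn
      _ = K * c * Real.exp c / n := by ring
  have hcompl : ∀ n, probPair n k (p n) (fun H₁ H₂ => ∀ B : Finset (Fin n), #B ≤ t →
      DisjointCovers {e ∈ H₁ | e ⊆ B} {e ∈ H₂ | e ⊆ B}) = 1 - _ := fun n =>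
    eq_sub_of_add_eq (probPair_add_probPair_not _)
  simp only [hcompl]
  simpa using (tendsto_const_nhds (x := (1 : ℝ))).sub hfail
end
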